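/- arXiv:math/0505473 — 7 statements merged into one kernel-verified Lean document; each statement's English description precedes it below -/
import Mathlib

section
/- Let Q be an unbounded face of P_a with Q + e_n ⊆ Q, let p: R^n → R^{n-1} be the projection onto the first n-1 coordinates, and let a' be the monomial ideal in C[x_1,...,x_{n-1}] generated by the projections of the generators of a. Then P_{a'} = p(P_a), and Q' := p(Q) is a face of P_{a'} with Q = P_a ∩ p^{-1}(Q'). -/
open Set

namespace BS

def toR {n : ℕ} (u : Fin n → ℤ) : Fin n → ℝ := fun i => (u i : ℝ)

def natR {n : ℕ} (u : Fin n → ℕ) : Fin n → ℝ := fun i => (u i : ℝ)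

def natZ {n : ℕ} (u : Fin n → ℕ) : Fin n → ℤ := fun i => (u i : ℤ)

/-- `Γ` is the exponent set of a nonzero monomial ideal. -/
def IsMonIdeal {n : ℕ} (Γ : Set (Fin n → ℕ)) : Prop :=
  Γ.Nonempty ∧ ∀ u ∈ Γ, ∀ w : Fin n → ℕ, u + w ∈ Γ

/-- The Newton polyhedron: convex hull of the exponent set. -/
def newton {n : ℕ} (Γ : Set (Fin n → ℕ)) : Set (Fin n → ℝ) :=
  convexHull ℝ (natR '' Γ)

/-- The subsemigroup (containing 0) of ℤⁿ generated by differences u - v,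
u ∈ Γ, v ∈ Γ ∩ Q. -/
def diffMonoid {n : ℕ} (Γ : Set (Fin n → ℕ)) (Q : Set (Fin n → ℝ)) :
    AddSubmonoid (Fin n → ℤ) :=
  AddSubmonoid.closure {d | ∃ u ∈ Γ, ∃ v ∈ Γ, natR v ∈ Q ∧ d = natZ u - natZ v}

/-- M_Q : the translate by e = (1,...,1) of the difference semigroup. -/
def MQ {n : ℕ} (Γ : Set (Fin n → ℕ)) (Q : Set (Fin n → ℝ)) : Set (Fin n → ℤ) :=
  {m | m - 1 ∈ diffMonoid Γ Q}

/-- M_Q^{(k)} = k·v₀ + M_Q. -/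
def MQk {n : ℕ} (Γ : Set (Fin n → ℕ)) (Q : Set (Fin n → ℝ)) (v0 : Fin n → ℕ) (k : ℕ) :
    Set (Fin n → ℤ) :=
  {m | m - (k : ℤ) • natZ v0 ∈ MQ Γ Q}

/-- V_Q : linear span of the face Q. -/
def VQ {n : ℕ} (Q : Set (Fin n → ℝ)) : Submodule ℝ (Fin n → ℝ) := Submodule.span ℝ Q

/-- R_Q = { -L_Q(u) : u ∈ (M_Q \ M_Q') ∩ V_Q }. -/
def RQ {n : ℕ} (Γ : Set (Fin n → ℕ)) (Q : Set (Fin n → ℝ)) (v0 : Fin n → ℕ)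
    (L : (Fin n → ℝ) →ₗ[ℝ] ℝ) : Set ℝ :=
  {x | ∃ u ∈ MQ Γ Q \ MQk Γ Q v0 1, toR u ∈ VQ Q ∧ x = - L (toR u)}

/-- Q is contained in some coordinate hyperplane. -/
def InCoordHyp {n : ℕ} (Q : Set (Fin n → ℝ)) : Prop := ∃ i, ∀ q ∈ Q, q i = 0

/-- The subgroup G_Q of ℤⁿ generated by differences of elements of Γ ∩ Q. -/
def diffGroup {n : ℕ} (Γ : Set (Fin n → ℕ)) (Q : Set (Fin n → ℝ)) :
    AddSubgroup (Fin n → ℤ) :=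
  AddSubgroup.closure
    {d | ∃ u ∈ Γ, natR u ∈ Q ∧ ∃ v ∈ Γ, natR v ∈ Q ∧ d = natZ u - natZ v}

end BS

namespace BS
/-- Projection forgetting the last coordinate. -/
def pR {n : ℕ} : (Fin (n+1) → ℝ) → (Fin n → ℝ) := fun x => x ∘ Fin.castSucc
def pN {n : ℕ} : (Fin (n+1) → ℕ) → (Fin n → ℕ) := fun x => x ∘ Fin.castSucc
def pZ {n : ℕ} : (Fin (n+1) → ℤ) → (Fin n → ℤ) := fun x => x ∘ Fin.castSucc
end BS


namespace BS

def pL {n : ℕ} : (Fin (n+1) → ℝ) →ₗ[ℝ] (Fin n → ℝ) := LinearMap.funLeft ℝ ℝ Fin.castSucc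

def sL {n : ℕ} : (Fin n → ℝ) →ₗ[ℝ] (Fin (n+1) → ℝ) where
  toFun y := Fin.snoc y 0
  map_add' a b := by
    funext i
    refine Fin.lastCases ?_ (fun j => ?_) i <;> simp
  map_smul' c a := by
    funext i
    refine Fin.lastCases ?_ (fun j => ?_) i <;> simp

lemma decomp {n : ℕ} (x : Fin (n+1) → ℝ) :
    x = (sL (pR x)) + x (Fin.last n) • (Pi.single (Fin.last n) (1:ℝ) : Fin (n+1) → ℝ) := by
  funext i
  refine Fin.lastCases ?_ (fun j => ?_) i
  · simp [sL, pR, Pi.single_eq_same]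
  · simp [sL, pR, Pi.single_eq_of_ne (Fin.castSucc_lt_last j).ne]

end BS

/-- Projection of the Newton polyhedron along an unbounded direction of a face. -/
theorem projection_newton_face {n : ℕ} (Γ : Set (Fin (n+1) → ℕ))
    (hΓ : BS.IsMonIdeal Γ) (Q : Set (Fin (n+1) → ℝ))
    (hface : IsExposed ℝ (BS.newton Γ) Q)
    (hQe : ∀ q ∈ Q, q + Pi.single (Fin.last n) 1 ∈ Q) :
    BS.newton (BS.pN '' Γ) = BS.pR '' BS.newton Γ ∧
    IsExposed ℝ (BS.newton (BS.pN '' Γ)) (BS.pR '' Q) ∧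
    Q = BS.newton Γ ∩ BS.pR ⁻¹' (BS.pR '' Q) := by
  have hproj : BS.newton (BS.pN '' Γ) = BS.pR '' BS.newton Γ := by
    unfold BS.newton
    have h1 : BS.natR '' (BS.pN '' Γ) = BS.pR '' (BS.natR '' Γ) := by
      rw [← Set.image_comp, ← Set.image_comp]
      rfl
    rw [h1]
    have := (BS.pL (n := n)).image_convexHull (BS.natR '' Γ)
    exact this.symm
  refine ⟨hproj, ?_⟩
  by_cases hQne : Q.Nonempty
  · obtain ⟨l, hQl⟩ := hface hQne
    obtain ⟨q0, hq0⟩ := hQne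
    have hq0' := hq0; rw [hQl] at hq0'
    have hle : l (Pi.single (Fin.last n) 1) = 0 := by
      have h1 := hQe q0 hq0
      rw [hQl] at h1
      have h2 := h1.2 q0 hq0'.1
      have h3 := hq0'.2 _ h1.1
      simp only [map_add] at h2 h3
      linarith
    have hkey : ∀ x : Fin (n+1) → ℝ, l (BS.sL (BS.pR x)) = l x := by
      intro x
      conv_rhs => rw [BS.decomp x]
      simp [hle]
    set l' : (Fin n → ℝ) →L[ℝ] ℝ :=
      ((l : (Fin (n+1) → ℝ) →ₗ[ℝ] ℝ).comp BS.sL).toContinuousLinearMap with hl'def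
    have hl' : ∀ x : Fin (n+1) → ℝ, l' (BS.pR x) = l x := fun x => hkey x
    constructor
    · intro _
      refine ⟨l', ?_⟩
      rw [hproj]
      ext y; constructor
      · rintro ⟨x, hxQ, rfl⟩
        rw [hQl] at hxQ
        refine ⟨⟨x, hxQ.1, rfl⟩, ?_⟩
        rintro z ⟨w, hw, rfl⟩
        rw [hl', hl']
        exact hxQ.2 w hw
      · rintro ⟨⟨x, hxP, rfl⟩, hymax⟩
        refine ⟨x, ?_, rfl⟩
        rw [hQl]
        refine ⟨hxP, fun w hw => ?_⟩
        have := hymax (BS.pR w) ⟨w, hw, rfl⟩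
        rwa [hl', hl'] at this
    · ext x; constructor
      · intro hx
        have hx' := hx; rw [hQl] at hx'
        exact ⟨hx'.1, ⟨x, hx, rfl⟩⟩
      · rintro ⟨hxP, q, hqQ, hpq⟩
        rw [hQl] at hqQ ⊢
        refine ⟨hxP, fun y hy => ?_⟩
        have hlx : l x = l q := by rw [← hkey x, ← hkey q, hpq]
        rw [hlx]
        exact hqQ.2 y hy
  · rw [Set.not_nonempty_iff_eq_empty] at hQne
    subst hQne
    refine ⟨fun hne => absurd hne (by simp), by simp⟩
end

section
/- With the setup of the projection p and face Q with Q + e_n ⊆ Q: p(M_Q \ M_Q') = M_{Q'} \ M_{Q'}' and V_Q = p^{-1}(V_{Q'}); consequently R_Q = R_{Q'}. -/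
open Set

/-!
The projection `p` is compatible with everything in sight because `Q` contains whole rays in the
direction `eₙ`. Lifting a point of `Γ' ∩ Q'` to `Γ ∩ Q` only needs a large enough last
coordinate, so `p` maps the difference semigroup of `(Γ, Q)` onto that of `(Γ', Q')`; and both
`±eₙ` are differences `(v₀ + eₙ) - v₀` of points of `Γ ∩ Q`, so the kernel `ℤ eₙ` of `p` lies in
the semigroup, and likewise `eₙ ∈ V_Q`. Hence `M_Q`, `M_Q'` and `V_Q` are full preimages under
`p`, and `p` surjects onto the projected sets, which gives all three equalities.
-/

theorem AddSubmonoid.comap_map_eq_self_of_ker_subset {G H : Type*} [AddGroup G] [AddGroup H]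
    {f : G →+ H} {S : AddSubmonoid G} (h : ∀ x, f x = 0 → x ∈ S) :
    (S.map f).comap f = S := by
  refine le_antisymm (fun x hx => ?_) (AddSubmonoid.le_comap_map S)
  obtain ⟨s, hs, hsx⟩ := hx
  have hker : -s + x ∈ S := h _ (by rw [map_add, map_neg, hsx, neg_add_cancel])
  simpa using S.add_mem hs hker

theorem Convex.add_smul_mem_of_forall_add_mem {𝕜 E : Type*} [Field 𝕜] [LinearOrder 𝕜]
    [IsStrictOrderedRing 𝕜] [FloorSemiring 𝕜] [AddCommGroup E] [Module 𝕜 E] {s : Set E}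
    (hs : Convex 𝕜 s) {y : E} (hy : ∀ x ∈ s, x + y ∈ s) {x : E} (hx : x ∈ s) {t : 𝕜}
    (ht : 0 ≤ t) : x + t • y ∈ s := by
  have hN : ∀ N : ℕ, x + (N : 𝕜) • y ∈ s := by
    intro N
    induction N with
    | zero => simpa using hx
    | succ N ih => simpa [add_smul, add_assoc] using hy _ ih
  set N : ℕ := ⌈t⌉₊ + 1
  have hN0 : (0 : 𝕜) < N := by positivity
  have htN : t ≤ N := (Nat.le_ceil t).trans (by simp [N])
  have hmem := hs.add_smul_mem hx (hN N) ⟨div_nonneg ht hN0.le, (div_le_one hN0).2 htN⟩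
  rwa [smul_smul, div_mul_cancel₀ _ hN0.ne'] at hmem

namespace BS

variable {n : ℕ}

def pZHom : (Fin (n+1) → ℤ) →+ (Fin n → ℤ) where
  toFun := pZ
  map_zero' := rfl
  map_add' _ _ := rfl

theorem pZ_surjective : Function.Surjective (pZ (n := n)) :=
  fun x => ⟨Fin.snoc x 0, by funext j; simp [pZ]⟩

theorem eq_add_single_last_of_comp_castSucc_eq {M : Type*} [AddCommGroup M]
    {a b : Fin (n+1) → M} (h : a ∘ Fin.castSucc = b ∘ Fin.castSucc) :
    a = b + Pi.single (Fin.last n) (a (Fin.last n) - b (Fin.last n)) := by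
  funext i
  induction i using Fin.lastCases with
  | last => simp
  | cast j => simpa [Pi.single_eq_of_ne (Fin.castSucc_lt_last j).ne] using congrFun h j

theorem eq_single_last_of_comp_castSucc_eq_zero {M : Type*} [AddCommGroup M]
    {a : Fin (n+1) → M} (h : a ∘ Fin.castSucc = 0) :
    a = Pi.single (Fin.last n) (a (Fin.last n)) := by
  simpa using eq_add_single_last_of_comp_castSucc_eq (b := 0) h

theorem natZ_add_single (u : Fin n → ℕ) (i : Fin n) (k : ℕ) :
    natZ (u + Pi.single i k) = natZ u + Pi.single i (k : ℤ) := by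
  funext j
  by_cases hj : j = i
  · subst hj; simp [natZ]
  · simp [natZ, Pi.single_eq_of_ne hj]

theorem natR_add_single (u : Fin n → ℕ) (i : Fin n) (k : ℕ) :
    natR (u + Pi.single i k) = natR u + Pi.single i (k : ℝ) := by
  funext j
  by_cases hj : j = i
  · subst hj; simp [natR]
  · simp [natR, Pi.single_eq_of_ne hj]

section Projection

variable {Γ : Set (Fin (n+1) → ℕ)} {Q : Set (Fin (n+1) → ℝ)}
  (hΓ : IsMonIdeal Γ) (hQe : ∀ q ∈ Q, q + Pi.single (Fin.last n) 1 ∈ Q)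

include hΓ hQe

theorem single_last_mem_diffMonoid {v0 : Fin (n+1) → ℕ} (hv0 : v0 ∈ Γ) (hv0Q : natR v0 ∈ Q)
    (t : ℤ) : Pi.single (Fin.last n) t ∈ diffMonoid Γ Q := by
  set e : Fin (n+1) → ℕ := Pi.single (Fin.last n) 1
  have hv1 : v0 + e ∈ Γ := hΓ.2 v0 hv0 e
  have hv1Q : natR (v0 + e) ∈ Q := by
    rw [natR_add_single]; exact_mod_cast hQe _ hv0Q
  have hpos : Pi.single (Fin.last n) (1 : ℤ) ∈ diffMonoid Γ Q :=
    AddSubmonoid.subset_closure ⟨v0 + e, hv1, v0, hv0, hv0Q, by rw [natZ_add_single]; abel⟩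
  have hneg : Pi.single (Fin.last n) (-1 : ℤ) ∈ diffMonoid Γ Q :=
    AddSubmonoid.subset_closure ⟨v0, hv0, v0 + e, hv1, hv1Q, by
      rw [natZ_add_single, Pi.single_neg]; abel⟩
  induction t using Int.induction_on with
  | zero => simp
  | succ k ih => simpa [Pi.single_add] using (diffMonoid Γ Q).add_mem ih hpos
  | pred k ih => simpa [sub_eq_add_neg, Pi.single_add] using (diffMonoid Γ Q).add_mem ih hneg

theorem exists_lift_mem (hconv : Convex ℝ Q) {w : Fin (n+1) → ℕ} (hw : w ∈ Γ)
    {q : Fin (n+1) → ℝ} (hq : q ∈ Q) (hqw : pR q = natR (pN w)) :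
    ∃ v ∈ Γ, natR v ∈ Q ∧ pN v = pN w := by
  set v := w + Pi.single (Fin.last n) ⌈q (Fin.last n)⌉₊
  have hpv : pN v = pN w := by
    funext j
    simp [v, pN]
  have hv : natR v = q + (natR v (Fin.last n) - q (Fin.last n)) •
      (Pi.single (Fin.last n) 1 : Fin (n+1) → ℝ) := by
    rw [← Pi.single_smul', smul_eq_mul, mul_one]
    exact eq_add_single_last_of_comp_castSucc_eq ((congrArg natR hpv).trans hqw.symm)
  have hlast : q (Fin.last n) ≤ natR v (Fin.last n) := by
    have := Nat.le_ceil (q (Fin.last n))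
    simp only [v, natR, Pi.add_apply, Pi.single_eq_same, Nat.cast_add]
    linarith [(Nat.cast_nonneg (w (Fin.last n)) : (0 : ℝ) ≤ _)]
  refine ⟨v, hΓ.2 w hw _, ?_, hpv⟩
  rw [hv]
  exact hconv.add_smul_mem_of_forall_add_mem hQe hq (sub_nonneg.2 hlast)

theorem map_pZHom_diffMonoid (hconv : Convex ℝ Q) :
    (diffMonoid Γ Q).map pZHom = diffMonoid (pN '' Γ) (pR '' Q) := by
  rw [diffMonoid, AddMonoidHom.map_mclosure]
  congr 1
  apply Subset.antisymm
  · rintro _ ⟨_, ⟨u, hu, v, hv, hvQ, rfl⟩, rfl⟩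
    exact ⟨pN u, mem_image_of_mem _ hu, pN v, mem_image_of_mem _ hv, mem_image_of_mem _ hvQ,
      rfl⟩
  · rintro _ ⟨_, ⟨u, hu, rfl⟩, _, ⟨w, hw, rfl⟩, ⟨q, hq, hqw⟩, rfl⟩
    obtain ⟨v, hv, hvQ, hvw⟩ := exists_lift_mem hΓ hQe hconv hw hq hqw
    exact ⟨natZ u - natZ v, ⟨u, hu, v, hv, hvQ, rfl⟩, by rw [← hvw]; rfl⟩

theorem MQ_eq_preimage (hconv : Convex ℝ Q) {v0 : Fin (n+1) → ℕ} (hv0 : v0 ∈ Γ)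
    (hv0Q : natR v0 ∈ Q) : MQ Γ Q = pZ ⁻¹' MQ (pN '' Γ) (pR '' Q) := by
  have hker : ∀ m, pZHom m = 0 → m ∈ diffMonoid Γ Q := fun m hm => by
    rw [eq_single_last_of_comp_castSucc_eq_zero hm]
    exact single_last_mem_diffMonoid hΓ hQe hv0 hv0Q _
  have hcomap := AddSubmonoid.comap_map_eq_self_of_ker_subset hker
  rw [map_pZHom_diffMonoid hΓ hQe hconv] at hcomap
  ext m
  exact (SetLike.ext_iff.1 hcomap (m - 1)).symm

end Projection

theorem MQk_eq_preimage {Γ : Set (Fin (n+1) → ℕ)} {Q : Set (Fin (n+1) → ℝ)}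
    {Γ' : Set (Fin n → ℕ)} {Q' : Set (Fin n → ℝ)} (hM : MQ Γ Q = pZ ⁻¹' MQ Γ' Q')
    (v0 : Fin (n+1) → ℕ) (k : ℕ) : MQk Γ Q v0 k = pZ ⁻¹' MQk Γ' Q' (pN v0) k := by
  ext m
  change m - (k : ℤ) • natZ v0 ∈ MQ Γ Q ↔ _
  rw [hM]
  rfl

theorem VQ_eq_preimage {Q : Set (Fin (n+1) → ℝ)}
    (hQe : ∀ q ∈ Q, q + Pi.single (Fin.last n) 1 ∈ Q) {q : Fin (n+1) → ℝ} (hq : q ∈ Q) :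
    (VQ Q : Set (Fin (n+1) → ℝ)) = pR ⁻¹' VQ (pR '' Q) := by
  set p := LinearMap.funLeft ℝ ℝ (Fin.castSucc (n := n))
  have he : (Pi.single (Fin.last n) 1 : Fin (n+1) → ℝ) ∈ VQ Q := by
    simpa using (VQ Q).sub_mem (Submodule.subset_span (hQe q hq)) (Submodule.subset_span hq)
  have hker : LinearMap.ker p ≤ VQ Q := fun x hx => by
    rw [eq_single_last_of_comp_castSucc_eq_zero hx, ← mul_one (x _), ← smul_eq_mul,
      Pi.single_smul']
    exact (VQ Q).smul_mem _ he
  have hmap : VQ (pR '' Q) = (VQ Q).map p := Submodule.span_image p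
  rw [hmap]
  exact congrArg SetLike.coe (Submodule.comap_map_eq_self hker).symm

theorem RQ_comp_funLeft_eq {Γ : Set (Fin (n+1) → ℕ)} {Q : Set (Fin (n+1) → ℝ)}
    {Γ' : Set (Fin n → ℕ)} {Q' : Set (Fin n → ℝ)} {v0 : Fin (n+1) → ℕ} {v0' : Fin n → ℕ}
    (hM : MQ Γ Q = pZ ⁻¹' MQ Γ' Q') (hMk : MQk Γ Q v0 1 = pZ ⁻¹' MQk Γ' Q' v0' 1)
    (hV : (VQ Q : Set (Fin (n+1) → ℝ)) = pR ⁻¹' VQ Q') (L' : (Fin n → ℝ) →ₗ[ℝ] ℝ) :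
    RQ Γ Q v0 (L'.comp (LinearMap.funLeft ℝ ℝ Fin.castSucc)) = RQ Γ' Q' v0' L' := by
  have hdiff : MQ Γ Q \ MQk Γ Q v0 1 = pZ ⁻¹' (MQ Γ' Q' \ MQk Γ' Q' v0' 1) := by
    rw [hM, hMk, preimage_sdiff]
  have hVu : ∀ u, toR u ∈ VQ Q ↔ toR (pZ u) ∈ VQ Q' := fun u => by
    rw [← SetLike.mem_coe, hV]
    rfl
  ext x
  constructor
  · rintro ⟨u, hu, huV, rfl⟩
    exact ⟨pZ u, by rwa [hdiff] at hu, (hVu u).1 huV, rfl⟩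
  · rintro ⟨_, hu, huV, rfl⟩
    obtain ⟨u, rfl⟩ := pZ_surjective ‹Fin n → ℤ›
    exact ⟨u, by rwa [hdiff], (hVu u).2 huV, rfl⟩

end BS

theorem projection_MQ_VQ_RQ_general {n : ℕ} (Γ : Set (Fin (n+1) → ℕ))
    (hΓ : BS.IsMonIdeal Γ) (Q : Set (Fin (n+1) → ℝ))
    (hface : IsExposed ℝ (BS.newton Γ) Q)
    (hQe : ∀ q ∈ Q, q + Pi.single (Fin.last n) 1 ∈ Q)
    (v0 : Fin (n+1) → ℕ) (hv0 : v0 ∈ Γ) (hv0Q : BS.natR v0 ∈ Q)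
    (L' : (Fin n → ℝ) →ₗ[ℝ] ℝ) :
    BS.pZ '' (BS.MQ Γ Q \ BS.MQk Γ Q v0 1) =
      BS.MQ (BS.pN '' Γ) (BS.pR '' Q) \ BS.MQk (BS.pN '' Γ) (BS.pR '' Q) (BS.pN v0) 1 ∧
    (BS.VQ Q : Set (Fin (n+1) → ℝ)) = BS.pR ⁻¹' (BS.VQ (BS.pR '' Q)) ∧
    BS.RQ Γ Q v0 (L'.comp (LinearMap.funLeft ℝ ℝ Fin.castSucc)) =
      BS.RQ (BS.pN '' Γ) (BS.pR '' Q) (BS.pN v0) L' := by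
  have hconv : Convex ℝ Q := hface.convex (convex_convexHull ℝ _)
  have hM := BS.MQ_eq_preimage hΓ hQe hconv hv0 hv0Q
  have hMk := BS.MQk_eq_preimage hM v0 1
  have hV := BS.VQ_eq_preimage hQe hv0Q
  refine ⟨?_, hV, BS.RQ_comp_funLeft_eq hM hMk hV L'⟩
  rw [hM, hMk, ← preimage_sdiff, image_preimage_eq _ BS.pZ_surjective]

/-- p(M_Q \\ M_Q') = M_{Q'} \\ M_{Q'}', V_Q = p⁻¹(V_{Q'}), and R_Q = R_{Q'}. -/
theorem projection_MQ_VQ_RQ {n : ℕ} (Γ : Set (Fin (n+1) → ℕ))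
    (hΓ : BS.IsMonIdeal Γ) (Q : Set (Fin (n+1) → ℝ))
    (hface : IsExposed ℝ (BS.newton Γ) Q)
    (hQe : ∀ q ∈ Q, q + Pi.single (Fin.last n) 1 ∈ Q)
    (hnc : ¬ BS.InCoordHyp Q)
    (v0 : Fin (n+1) → ℕ) (hv0 : v0 ∈ Γ) (hv0Q : BS.natR v0 ∈ Q)
    (L' : (Fin n → ℝ) →ₗ[ℝ] ℝ) (hL' : ∀ q ∈ BS.pR '' Q, L' q = 1)
    (hL'rat : ∀ i, ∃ q : ℚ, L' (Pi.single i 1) = (q : ℝ)) :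
    BS.pZ '' (BS.MQ Γ Q \ BS.MQk Γ Q v0 1) =
      BS.MQ (BS.pN '' Γ) (BS.pR '' Q) \ BS.MQk (BS.pN '' Γ) (BS.pR '' Q) (BS.pN v0) 1 ∧
    (BS.VQ Q : Set (Fin (n+1) → ℝ)) = BS.pR ⁻¹' (BS.VQ (BS.pR '' Q)) ∧
    BS.RQ Γ Q v0 (L'.comp (LinearMap.funLeft ℝ ℝ Fin.castSucc)) =
      BS.RQ (BS.pN '' Γ) (BS.pR '' Q) (BS.pN v0) L' :=
  projection_MQ_VQ_RQ_general Γ hΓ Q hface hQe v0 hv0 hv0Q L'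
end

section
/- Let Q be a facet of P_a not contained in any coordinate hyperplane, with unique linear function L_Q equal to 1 on Q. Then e = (1,...,1) lies in (M_Q \ M_Q') ∩ V_Q; in particular -L_Q(e) ∈ R_Q. -/
open Set

namespace BS

variable {n : ℕ}

@[simp]
lemma toR_zero : toR (0 : Fin n → ℤ) = 0 := by
  funext i; simp [toR]

@[simp]
lemma toR_add (a b : Fin n → ℤ) : toR (a + b) = toR a + toR b := by
  funext i; simp [toR]

@[simp]
lemma toR_sub (a b : Fin n → ℤ) : toR (a - b) = toR a - toR b := by
  funext i; simp [toR]

@[simp]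
lemma toR_zsmul (k : ℤ) (a : Fin n → ℤ) : toR (k • a) = (k : ℝ) • toR a := by
  funext i; simp [toR]

@[simp]
lemma toR_natZ (u : Fin n → ℕ) : toR (natZ u) = natR u := by
  funext i; simp [toR, natZ, natR]

lemma natR_mem_newton {Γ : Set (Fin n → ℕ)} {u : Fin n → ℕ} (hu : u ∈ Γ) :
    natR u ∈ newton Γ :=
  subset_convexHull ℝ _ ⟨u, hu, rfl⟩

lemma one_mem_MQ (Γ : Set (Fin n → ℕ)) (Q : Set (Fin n → ℝ)) : (1 : Fin n → ℤ) ∈ MQ Γ Q := by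
  simp [MQ, zero_mem]

section LinearBound

variable {Γ : Set (Fin n → ℕ)} {Q : Set (Fin n → ℝ)} {L : (Fin n → ℝ) →ₗ[ℝ] ℝ}

lemma map_toR_nonneg_of_mem_diffMonoid (hΓ : ∀ u ∈ Γ, 1 ≤ L (natR u)) (hQ : ∀ q ∈ Q, L q = 1)
    {m : Fin n → ℤ} (hm : m ∈ diffMonoid Γ Q) : 0 ≤ L (toR m) := by
  induction hm using AddSubmonoid.closure_induction with
  | mem d hd =>
    obtain ⟨u, hu, v, -, hvQ, rfl⟩ := hd
    have hLu := hΓ u hu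
    have hLv := hQ _ hvQ
    simp only [toR_sub, toR_natZ, map_sub]
    linarith
  | zero => simp
  | add a b _ _ ha hb =>
    rw [toR_add, map_add]
    exact add_nonneg ha hb

lemma le_map_toR_of_mem_MQ (hΓ : ∀ u ∈ Γ, 1 ≤ L (natR u)) (hQ : ∀ q ∈ Q, L q = 1)
    {m : Fin n → ℤ} (hm : m ∈ MQ Γ Q) : L (toR 1) ≤ L (toR m) := by
  have := map_toR_nonneg_of_mem_diffMonoid hΓ hQ hm
  rw [toR_sub, map_sub] at this
  linarith

lemma add_le_map_toR_of_mem_MQk (hΓ : ∀ u ∈ Γ, 1 ≤ L (natR u)) (hQ : ∀ q ∈ Q, L q = 1)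
    {v₀ : Fin n → ℕ} {k : ℕ} {m : Fin n → ℤ} (hm : m ∈ MQk Γ Q v₀ k) :
    L (toR 1) + k * L (natR v₀) ≤ L (toR m) := by
  have := le_map_toR_of_mem_MQ hΓ hQ hm
  simp only [toR_sub, toR_zsmul, toR_natZ, map_sub, map_smul, Int.cast_natCast, smul_eq_mul]
    at this
  linarith

end LinearBound

end BS

theorem e_mem_MQ_diff_general {n : ℕ} (Γ : Set (Fin n → ℕ))
    (Q : Set (Fin n → ℝ))
    (L : (Fin n → ℝ) →ₗ[ℝ] ℝ) (hL1 : ∀ q ∈ Q, L q = 1)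
    (hLge : ∀ x ∈ BS.newton Γ, 1 ≤ L x)
    (hspan : BS.VQ Q = ⊤)
    (v0 : Fin n → ℕ) (hv0Q : BS.natR v0 ∈ Q) :
    (1 : Fin n → ℤ) ∈ BS.MQ Γ Q \ BS.MQk Γ Q v0 1 ∧
    BS.toR (1 : Fin n → ℤ) ∈ BS.VQ Q ∧
    - L (BS.toR (1 : Fin n → ℤ)) ∈ BS.RQ Γ Q v0 L := by
  have hΓ : ∀ u ∈ Γ, 1 ≤ L (BS.natR u) := fun u hu => hLge _ (BS.natR_mem_newton hu)
  have hmem : (1 : Fin n → ℤ) ∈ BS.MQ Γ Q \ BS.MQk Γ Q v0 1 := by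
    refine ⟨BS.one_mem_MQ Γ Q, fun h => ?_⟩
    have := BS.add_le_map_toR_of_mem_MQk hΓ hL1 h
    rw [hL1 _ hv0Q] at this
    norm_num at this
  have hV : BS.toR (1 : Fin n → ℤ) ∈ BS.VQ Q := hspan ▸ Submodule.mem_top
  exact ⟨hmem, hV, 1, hmem, hV, rfl⟩

/-- For a facet Q not contained in any coordinate hyperplane, e = (1,...,1) lies in
(M_Q \\ M_Q') ∩ V_Q; in particular -L_Q(e) ∈ R_Q. -/
theorem e_mem_MQ_diff {n : ℕ} (Γ : Set (Fin n → ℕ)) (hΓ : BS.IsMonIdeal Γ)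
    (hproper : (0 : Fin n → ℕ) ∉ Γ)
    (Q : Set (Fin n → ℝ)) (hface : IsExposed ℝ (BS.newton Γ) Q)
    (hnc : ¬ BS.InCoordHyp Q)
    (L : (Fin n → ℝ) →ₗ[ℝ] ℝ) (hL1 : ∀ q ∈ Q, L q = 1)
    (hLge : ∀ x ∈ BS.newton Γ, 1 ≤ L x)
    (hQeq : Q = BS.newton Γ ∩ {x | L x = 1})
    (hspan : BS.VQ Q = ⊤)
    (v0 : Fin n → ℕ) (hv0 : v0 ∈ Γ) (hv0Q : BS.natR v0 ∈ Q) :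
    (1 : Fin n → ℤ) ∈ BS.MQ Γ Q \ BS.MQk Γ Q v0 1 ∧
    BS.toR (1 : Fin n → ℤ) ∈ BS.VQ Q ∧
    - L (BS.toR (1 : Fin n → ℤ)) ∈ BS.RQ Γ Q v0 L :=
  e_mem_MQ_diff_general Γ Q L hL1 hLge hspan v0 hv0Q
end

section
/- For the ideal a = (x^a y, x y^b) with a, b ≥ 2 and the bounded face Q of P_a joining (a,1) and (1,b): with L_Q(x,y) = ((b-1)x + (a-1)y)/(ab-1), the set R_Q is exactly {-((b-1)i + (a-1)j)/(ab-1) : 1 ≤ i ≤ a, 1 ≤ j ≤ b}. -/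
open Set

/-! Modulo the line `ℤ (a - 1, 1 - b)`, along which `L_Q` is constant, the monoid generated by
the differences `u - v` is just `ℕ²`. Hence `M_Q \ M_Q'` consists of the translates along that
line of the box `[1, a] × [1, b]`, and `R_Q` is the set of values of `-L_Q` on the box. The one
real step is that every point of `M_Q \ M_Q'` can be slid into the box: reduce the first
coordinate modulo `a - 1`, and if the second coordinate is then too large, slide once more. -/

namespace XayXyb

open BS

/-- The lattice points `ℕ² + ℤ (A, -B)`. -/
def quadrantMod (A B : ℤ) : AddSubmonoid (Fin 2 → ℤ) where
  carrier := {m | ∃ k : ℤ, k * A ≤ m 0 ∧ 0 ≤ m 1 + k * B}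
  zero_mem' := ⟨0, by simp⟩
  add_mem' := by
    rintro m n ⟨k, hkm, hkm'⟩ ⟨l, hln, hln'⟩
    exact ⟨k + l, by simp only [Pi.add_apply]; linarith, by simp only [Pi.add_apply]; linarith⟩

theorem mem_quadrantMod {A B : ℤ} {m : Fin 2 → ℤ} :
    m ∈ quadrantMod A B ↔ ∃ k : ℤ, k * A ≤ m 0 ∧ 0 ≤ m 1 + k * B :=
  Iff.rfl

theorem mem_quadrantMod_and_sub_notMem_iff {A B : ℤ} (hA : 0 < A) (hB : 0 ≤ B)
    (m : Fin 2 → ℤ) :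
    m ∈ quadrantMod A B ∧ m - ![A + 1, 1] ∉ quadrantMod A B ↔
      ∃ k : ℤ, 0 ≤ m 0 - k * A ∧ m 0 - k * A ≤ A ∧ 0 ≤ m 1 + k * B ∧ m 1 + k * B ≤ B := by
  simp only [mem_quadrantMod, Pi.sub_apply, Matrix.cons_val_zero, Matrix.cons_val_one,
    not_exists, not_and, not_le]
  constructor
  · rintro ⟨⟨k₀, hk₀, hk₀'⟩, hout⟩
    set k := m 0 / A
    have hdiv : A * k + m 0 % A = m 0 := Int.mul_ediv_add_emod _ _
    have hr₀ : 0 ≤ m 0 % A := Int.emod_nonneg _ hA.ne'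
    have hrA : m 0 % A < A := Int.emod_lt_of_pos _ hA
    have hk : k₀ ≤ k := Int.le_ediv_of_mul_le hA hk₀
    have hy : 0 ≤ m 1 + k * B := by
      have := mul_le_mul_of_nonneg_right hk hB
      linarith
    by_cases hyB : m 1 + k * B ≤ B
    · exact ⟨k, by linarith, by linarith, hy, hyB⟩
    -- otherwise `k - 1`, resp. `k - 2`, would witness `m - (A + 1, 1) ∈ quadrantMod A B`
    have hr : m 0 % A = 0 := by
      by_contra hr
      have := hout (k - 1) (by
        have : 1 ≤ m 0 % A := by omega
        linarith)
      linarith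
    have hy2B : m 1 + k * B ≤ 2 * B := by
      by_contra hy2B
      have := hout (k - 2) (by linarith)
      linarith
    exact ⟨k - 1, by linarith, by linarith, by linarith, by linarith⟩
  · rintro ⟨k, h₀, h₀A, h₁, h₁B⟩
    refine ⟨⟨k, by linarith, h₁⟩, fun k' hk' => ?_⟩
    have hlt : k' < k := lt_of_mul_lt_mul_right (by linarith) hA.le
    have : k' * B ≤ (k - 1) * B := mul_le_mul_of_nonneg_right (by omega) hB
    linarith

variable {a b : ℕ}

def gamma (a b : ℕ) : Set (Fin 2 → ℕ) :=
  {u | (a ≤ u 0 ∧ 1 ≤ u 1) ∨ (1 ≤ u 0 ∧ b ≤ u 1)}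

def face (a b : ℕ) : Set (Fin 2 → ℝ) :=
  segment ℝ ![(a : ℝ), 1] ![1, (b : ℝ)]

theorem eq_or_eq_of_mem_gamma_of_mem_face (ha : 1 < a) (hb : 1 < b) {v : Fin 2 → ℕ}
    (hv : v ∈ gamma a b) (hvQ : natR v ∈ face a b) : v = ![a, 1] ∨ v = ![1, b] := by
  obtain ⟨c, d, hc, hd, hcd, hcdv⟩ := hvQ
  have h₀ : (v 0 : ℝ) = c * a + d := by simpa [natR] using (congrFun hcdv 0).symm
  have h₁ : (v 1 : ℝ) = c + d * b := by simpa [natR] using (congrFun hcdv 1).symm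
  have ha' : (1 : ℝ) < a := by exact_mod_cast ha
  have hb' : (1 : ℝ) < b := by exact_mod_cast hb
  rcases hv with ⟨hv₀, -⟩ | ⟨-, hv₁⟩
  · have hv₀' : (a : ℝ) ≤ v 0 := by exact_mod_cast hv₀
    have hd0 : d = 0 := by nlinarith
    left
    ext i
    fin_cases i
    · exact_mod_cast (show (v 0 : ℝ) = a by rw [h₀, hd0, show c = 1 by linarith]; ring)
    · exact_mod_cast (show (v 1 : ℝ) = 1 by rw [h₁, hd0, show c = 1 by linarith]; ring)
  · have hv₁' : (b : ℝ) ≤ v 1 := by exact_mod_cast hv₁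
    have hc0 : c = 0 := by nlinarith
    right
    ext i
    fin_cases i
    · exact_mod_cast (show (v 0 : ℝ) = 1 by rw [h₀, hc0, show d = 1 by linarith]; ring)
    · exact_mod_cast (show (v 1 : ℝ) = b by rw [h₁, hc0, show d = 1 by linarith]; ring)

theorem natR_vec (p q : ℕ) : natR ![p, q] = ![(p : ℝ), q] := by
  ext i; fin_cases i <;> rfl

theorem natR_mem_face_left : natR ![a, 1] ∈ face a b := by
  rw [natR_vec, Nat.cast_one]; exact left_mem_segment ℝ _ _

theorem natR_mem_face_right : natR ![1, b] ∈ face a b := by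
  rw [natR_vec, Nat.cast_one]; exact right_mem_segment ℝ _ _

theorem diffMonoid_eq (ha : 1 < a) (hb : 1 < b) :
    diffMonoid (gamma a b) (face a b) = quadrantMod (a - 1) (b - 1) := by
  have hgen : ∀ u ∈ gamma a b, ∀ v ∈ gamma a b, natR v ∈ face a b →
      natZ u - natZ v ∈ diffMonoid (gamma a b) (face a b) :=
    fun u hu v hv hvQ => AddSubmonoid.subset_closure ⟨u, hu, v, hv, hvQ, rfl⟩
  have hleft : ![a, 1] ∈ gamma a b := Or.inl ⟨by simp, by simp⟩
  have hright : ![1, b] ∈ gamma a b := Or.inr ⟨by simp, by simp⟩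
  apply le_antisymm
  · rw [diffMonoid, AddSubmonoid.closure_le]
    rintro _ ⟨u, hu, v, hv, hvQ, rfl⟩
    rcases eq_or_eq_of_mem_gamma_of_mem_face ha hb hv hvQ with rfl | rfl <;>
      rcases hu with ⟨hu₀, hu₁⟩ | ⟨hu₀, hu₁⟩
    · exact ⟨0, by simp [natZ]; omega, by simp [natZ]; omega⟩
    · exact ⟨-1, by simp [natZ]; omega, by simp [natZ]; omega⟩
    · exact ⟨1, by simp [natZ]; omega, by simp [natZ]; omega⟩
    · exact ⟨0, by simp [natZ]; omega, by simp [natZ]; omega⟩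
  · set d := natZ ![a, 1] - natZ ![1, b]
    have hd : d ∈ diffMonoid (gamma a b) (face a b) := hgen _ hleft _ hright natR_mem_face_right
    have hnd : -d ∈ diffMonoid (gamma a b) (face a b) := by
      rw [neg_sub]; exact hgen _ hright _ hleft natR_mem_face_left
    have hkd (k : ℤ) : k • d ∈ diffMonoid (gamma a b) (face a b) := by
      induction k using Int.induction_on with
      | zero => simp
      | succ i hi => rw [add_zsmul, one_zsmul]; exact add_mem hi hd
      | pred i hi => rw [sub_zsmul, one_zsmul]; exact add_mem hi hnd
    rintro m ⟨k, hk₀, hk₁⟩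
    have hquad (w : Fin 2 → ℕ) : natZ w ∈ diffMonoid (gamma a b) (face a b) := by
      convert hgen (![a, 1] + w) (Or.inl ⟨by simp, by simp⟩) _ hleft natR_mem_face_left using 1
      ext i; simp only [natZ, Pi.sub_apply, Pi.add_apply, Nat.cast_add, add_sub_cancel_left]
    have hk₁' : 0 ≤ m 1 - k * (1 - b) := by linarith
    have hm : m = k • d + natZ (fun i => (m i - k • d i).toNat) := by
      ext i; fin_cases i <;> simp [d, natZ] <;> omega
    rw [hm]
    exact add_mem (hkd k) (hquad _)

theorem mem_MQ_sdiff_MQk_iff (ha : 1 < a) (hb : 1 < b) (u : Fin 2 → ℤ) :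
    u ∈ MQ (gamma a b) (face a b) \ MQk (gamma a b) (face a b) ![a, 1] 1 ↔
      ∃ i j : ℕ, ∃ k : ℤ, 1 ≤ i ∧ i ≤ a ∧ 1 ≤ j ∧ j ≤ b ∧
        u 0 = i + k * (a - 1) ∧ u 1 = j - k * (b - 1) := by
  have hshift : u - ((1 : ℕ) : ℤ) • natZ ![a, 1] - 1 = u - 1 - ![((a : ℤ) - 1) + 1, 1] := by
    ext i; fin_cases i <;> simp [natZ]; ring
  simp only [mem_sdiff, MQk, MQ, mem_ofPred_eq, hshift, diffMonoid_eq ha hb]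
  rw [mem_quadrantMod_and_sub_notMem_iff (by omega) (by omega)]
  simp only [Pi.sub_apply, Pi.one_apply]
  constructor
  · rintro ⟨k, h₀, h₀a, h₁, h₁b⟩
    refine ⟨(u 0 - k * (a - 1)).toNat, (u 1 + k * (b - 1)).toNat, k, ?_⟩
    omega
  · rintro ⟨i, j, k, hi, hia, hj, hjb, hu₀, hu₁⟩
    exact ⟨k, by omega, by omega, by omega, by omega⟩

theorem VQ_face_eq_top (hab : a * b ≠ 1) : VQ (face a b) = ⊤ := by
  have hab' : (a : ℝ) * b - 1 ≠ 0 := sub_ne_zero.2 (by exact_mod_cast hab)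
  refine Submodule.eq_top_iff'.2 fun x => ?_
  have hx : x = ((b * x 0 - x 1) / (a * b - 1)) • ![(a : ℝ), 1] +
      ((a * x 1 - x 0) / (a * b - 1)) • ![1, (b : ℝ)] := by
    ext i; fin_cases i <;> simp [div_mul_eq_mul_div, ← add_div, eq_div_iff hab'] <;> ring
  rw [hx]
  exact add_mem (Submodule.smul_mem _ _ (Submodule.subset_span (left_mem_segment ℝ _ _)))
    (Submodule.smul_mem _ _ (Submodule.subset_span (right_mem_segment ℝ _ _)))

end XayXyb

/-- For a = (x^a y, x y^b), a, b ≥ 2, and the bounded face Q joining (a,1), (1,b):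
R_Q = { -((b-1)i + (a-1)j)/(ab-1) : 1 ≤ i ≤ a, 1 ≤ j ≤ b }. -/
theorem example_xay_xyb (a b : ℕ) (ha : 2 ≤ a) (hb : 2 ≤ b)
    (L : (Fin 2 → ℝ) →ₗ[ℝ] ℝ)
    (hL : ∀ x, L x = (((b : ℝ) - 1) * x 0 + ((a : ℝ) - 1) * x 1) / ((a : ℝ) * b - 1)) :
    BS.RQ {u : Fin 2 → ℕ | (a ≤ u 0 ∧ 1 ≤ u 1) ∨ (1 ≤ u 0 ∧ b ≤ u 1)}
      (segment ℝ ![(a : ℝ), 1] ![1, (b : ℝ)]) ![a, 1] L =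
    {x : ℝ | ∃ i j : ℕ, 1 ≤ i ∧ i ≤ a ∧ 1 ≤ j ∧ j ≤ b ∧
      x = -((((b : ℝ) - 1) * i + ((a : ℝ) - 1) * j) / ((a : ℝ) * b - 1))} := by
  ext x
  constructor
  · rintro ⟨u, hu, -, rfl⟩
    obtain ⟨i, j, k, hi, hia, hj, hjb, hu₀, hu₁⟩ := (XayXyb.mem_MQ_sdiff_MQk_iff ha hb u).1 hu
    refine ⟨i, j, hi, hia, hj, hjb, ?_⟩
    rw [hL]
    simp only [BS.toR, hu₀, hu₁]
    push_cast
    ring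
  · rintro ⟨i, j, hi, hia, hj, hjb, rfl⟩
    refine ⟨![i, j], (XayXyb.mem_MQ_sdiff_MQk_iff ha hb _).2 ⟨i, j, 0, hi, hia, hj, hjb, by simp, by simp⟩,
      (XayXyb.VQ_face_eq_top (by nlinarith)).ge Submodule.mem_top, ?_⟩
    rw [hL]
    simp [BS.toR]
end

section
/- For the ideal a = (x^d, x^{d-a} y^a, y^d) with d ≥ 2 and a | d, and Q the bounded face of P_a from (d,0) to (0,d): with L_Q(x,y) = (x+y)/d, the set R_Q equals {-k/d : 2 ≤ k ≤ d + a}. -/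
open Set

/-
The points of `Γ ∩ Q` are `(d - j, j)` for `j ∈ {0, a, d}`, all with `a ∣ j`, and every point of
`Γ` dominates one of them; hence the difference monoid is `ℕ² + ℤ·(a, -a)`: `w` lies in it iff
some multiple of `a` lies in `[-w₁, w₀]`. Thus `u ∈ M_Q \ M_Q'` iff `[1 - u₁, u₀ - 1]` contains a
multiple of `a` and `[1 - u₁, u₀ - d - 1]` does not. The first condition forces `u₀ + u₁ ≥ 2`;
the second forces `u₀ + u₁ ≤ d + a`, since an interval of length `≥ a - 1` always contains a
multiple of `a`. Every `k` in between is realised, and `Q` spans `ℝ²`, so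
`R_Q = {-k/d : 2 ≤ k ≤ d + a}`.
-/

section MulMemIcc

variable {a lo hi : ℤ}

lemma Int.exists_mul_mem_Icc_of_add_le (ha : 0 < a) (h : lo + a ≤ hi + 1) :
    ∃ t, a * t ∈ Icc lo hi :=
  ⟨hi / a, by linarith [Int.lt_mul_ediv_self_add (x := hi) ha], Int.mul_ediv_self_le ha.ne'⟩

lemma Int.not_exists_mul_mem_Icc_of_neg (hlo : -a < lo) (hhi : hi < 0) :
    ¬ ∃ t, a * t ∈ Icc lo hi := by
  rintro ⟨t, hlo', hhi'⟩
  rcases le_or_gt 0 t with ht | ht <;> nlinarith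

end MulMemIcc

lemma AddSubmonoid.zsmul_mem_of_neg_mem {M : Type*} [AddGroup M] {S : AddSubmonoid M} {g : M}
    (hg : g ∈ S) (hg' : -g ∈ S) (t : ℤ) : t • g ∈ S := by
  obtain ⟨n, rfl | rfl⟩ := t.eq_nat_or_neg
  · simpa using S.nsmul_mem hg n
  · simpa using S.nsmul_mem hg' n

namespace BS

section Segment

variable {c : ℝ}

lemma add_eq_of_mem_segment {x : Fin 2 → ℝ} (hx : x ∈ segment ℝ ![c, 0] ![0, c]) :
    x 0 + x 1 = c := by
  obtain ⟨s, t, -, -, hst, rfl⟩ := hx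
  simp only [Pi.add_apply, Pi.smul_apply, smul_eq_mul, Matrix.cons_val_zero, Matrix.cons_val_one,
    Matrix.cons_val_fin_one, mul_zero, add_zero, zero_add]
  linear_combination c * hst

lemma natR_mem_segment {d p q : ℕ} (hd : 0 < d) (hpq : p + q = d) :
    natR ![p, q] ∈ segment ℝ ![(d : ℝ), 0] ![0, (d : ℝ)] := by
  have hd' : (d : ℝ) ≠ 0 := by positivity
  refine ⟨p / d, q / d, by positivity, by positivity, ?_, ?_⟩
  · rw [← add_div, div_eq_one_iff_eq hd']
    exact_mod_cast hpq
  · ext i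
    fin_cases i <;> simp [natR] <;> field_simp

lemma span_segment_eq_top (hc : c ≠ 0) : Submodule.span ℝ (segment ℝ ![c, 0] ![0, c]) = ⊤ := by
  refine Submodule.eq_top_iff'.mpr fun x => ?_
  have hx : x = (x 0 / c) • ![c, 0] + (x 1 / c) • ![0, c] := by
    ext i
    fin_cases i <;> simp <;> field_simp
  rw [hx]
  exact add_mem (Submodule.smul_mem _ _ (Submodule.subset_span (left_mem_segment ℝ _ _)))
    (Submodule.smul_mem _ _ (Submodule.subset_span (right_mem_segment ℝ _ _)))

end Segment

lemma natZ_sub_natZ_mem_diffMonoid {n : ℕ} {Γ : Set (Fin n → ℕ)} {Q : Set (Fin n → ℝ)}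
    {u v : Fin n → ℕ} (hu : u ∈ Γ) (hv : v ∈ Γ) (hvQ : natR v ∈ Q) :
    natZ u - natZ v ∈ diffMonoid Γ Q :=
  AddSubmonoid.subset_closure ⟨u, hu, v, hv, hvQ, rfl⟩

@[simp]
lemma natZ_vec2 (p q : ℕ) : natZ ![p, q] = ![(p : ℤ), q] := by
  ext i; fin_cases i <;> rfl

section XdYa

def xdyaExponents (d a : ℕ) : Set (Fin 2 → ℕ) :=
  {u | d ≤ u 0 ∨ (d - a ≤ u 0 ∧ a ≤ u 1) ∨ d ≤ u 1}

variable {d a : ℕ}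

local notation "Γ" => xdyaExponents d a
local notation "Q" => segment ℝ ![(d : ℝ), 0] ![0, (d : ℝ)]

lemma exists_dvd_of_mem_xdyaExponents (hdvd : a ∣ d) {u : Fin 2 → ℕ} (hu : u ∈ Γ) :
    ∃ j : ℤ, (a : ℤ) ∣ j ∧ (d : ℤ) - j ≤ u 0 ∧ j ≤ u 1 := by
  rcases hu with h | ⟨h0, h1⟩ | h
  · exact ⟨0, dvd_zero _, by omega, by omega⟩
  · exact ⟨a, dvd_rfl, by omega, by omega⟩
  · exact ⟨d, Int.natCast_dvd_natCast.mpr hdvd, by omega, by omega⟩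

lemma dvd_of_mem_xdyaExponents_of_add_eq (hdvd : a ∣ d) {v : Fin 2 → ℕ} (hv : v ∈ Γ)
    (hsum : v 0 + v 1 = d) : (a : ℤ) ∣ v 1 := by
  obtain ⟨j, hj, h0, h1⟩ := exists_dvd_of_mem_xdyaExponents hdvd hv
  rwa [show (v 1 : ℤ) = j by omega]

lemma exists_mul_mem_Icc_of_mem_diffMonoid (hdvd : a ∣ d) {w : Fin 2 → ℤ}
    (hw : w ∈ diffMonoid Γ Q) : ∃ t : ℤ, (a : ℤ) * t ∈ Icc (-w 1) (w 0) := by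
  induction hw using AddSubmonoid.closure_induction with
  | mem w hw =>
    obtain ⟨u, hu, v, hv, hvQ, rfl⟩ := hw
    have hsum : v 0 + v 1 = d := by
      have h : (v 0 : ℝ) + v 1 = d := add_eq_of_mem_segment hvQ
      exact_mod_cast h
    obtain ⟨j, hj, hu0, hu1⟩ := exists_dvd_of_mem_xdyaExponents hdvd hu
    obtain ⟨t, ht⟩ := dvd_sub (dvd_of_mem_xdyaExponents_of_add_eq hdvd hv hsum) hj
    refine ⟨t, ?_, ?_⟩ <;> simp only [Pi.sub_apply, natZ] <;> omega
  | zero => exact ⟨0, by simp⟩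
  | add x y _ _ hx hy =>
    obtain ⟨s, hs0, hs1⟩ := hx
    obtain ⟨t, ht0, ht1⟩ := hy
    exact ⟨s + t, by simp only [Pi.add_apply]; constructor <;> linarith⟩

lemma mem_diffMonoid_of_mul_mem_Icc (hd : 0 < d) (hdvd : a ∣ d) {w : Fin 2 → ℤ} {t : ℤ}
    (ht : (a : ℤ) * t ∈ Icc (-w 1) (w 0)) : w ∈ diffMonoid Γ Q := by
  have had : a ≤ d := Nat.le_of_dvd hd hdvd
  have hd0 : natR ![d, 0] ∈ Q := natR_mem_segment hd (add_zero d)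
  have hda : natR ![d - a, a] ∈ Q := natR_mem_segment hd (by omega)
  have hda' : ![d - a, a] ∈ Γ := Or.inr (Or.inl ⟨le_rfl, le_rfl⟩)
  have hd' : ![d, 0] ∈ Γ := Or.inl le_rfl
  set g : Fin 2 → ℤ := ![(a : ℤ), -a]
  have hg : g ∈ diffMonoid Γ Q := by
    convert natZ_sub_natZ_mem_diffMonoid hd' hda' hda using 1
    ext i; fin_cases i <;> simp [g, Nat.cast_sub had]
  have hg' : -g ∈ diffMonoid Γ Q := by
    convert natZ_sub_natZ_mem_diffMonoid hda' hd' hd0 using 1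
    ext i; fin_cases i <;> simp [g, Nat.cast_sub had]
  obtain ⟨p, hp⟩ := Int.eq_ofNat_of_zero_le (sub_nonneg.mpr ht.2)
  obtain ⟨q, hq⟩ := Int.eq_ofNat_of_zero_le (show 0 ≤ w 1 + a * t by linarith [ht.1])
  have hpq : ![(p : ℤ), q] ∈ diffMonoid Γ Q := by
    have hdp : ![d + p, q] ∈ Γ := Or.inl (Nat.le_add_right d p)
    convert natZ_sub_natZ_mem_diffMonoid hdp hd' hd0 using 1
    ext i; fin_cases i <;> simp
  have hw : w = ![(p : ℤ), q] + t • g := by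
    ext i; fin_cases i <;> simp [g] <;> linarith
  rw [hw]
  exact add_mem hpq (AddSubmonoid.zsmul_mem_of_neg_mem hg hg' t)

lemma mem_diffMonoid_iff (hd : 0 < d) (hdvd : a ∣ d) {w : Fin 2 → ℤ} :
    w ∈ diffMonoid Γ Q ↔ ∃ t : ℤ, (a : ℤ) * t ∈ Icc (-w 1) (w 0) :=
  ⟨exists_mul_mem_Icc_of_mem_diffMonoid hdvd,
    fun ⟨_, ht⟩ => mem_diffMonoid_of_mul_mem_Icc hd hdvd ht⟩

lemma mem_MQ_iff (hd : 0 < d) (hdvd : a ∣ d) {u : Fin 2 → ℤ} :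
    u ∈ MQ Γ Q ↔ ∃ t : ℤ, (a : ℤ) * t ∈ Icc (1 - u 1) (u 0 - 1) := by
  simp only [MQ, mem_ofPred_eq, mem_diffMonoid_iff hd hdvd, Pi.sub_apply, Pi.one_apply, neg_sub]

lemma mem_MQk_one_iff (hd : 0 < d) (hdvd : a ∣ d) {u : Fin 2 → ℤ} :
    u ∈ MQk Γ Q ![d, 0] 1 ↔ ∃ t : ℤ, (a : ℤ) * t ∈ Icc (1 - u 1) (u 0 - d - 1) := by
  simp only [MQk, mem_ofPred_eq, mem_MQ_iff hd hdvd, Pi.sub_apply, Pi.smul_apply, natZ_vec2]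
  simp

lemma add_mem_Icc_of_mem_MQ_diff (hd : 0 < d) (ha : 0 < a) (hdvd : a ∣ d) {u : Fin 2 → ℤ}
    (hu : u ∈ MQ Γ Q \ MQk Γ Q ![d, 0] 1) : u 0 + u 1 ∈ Icc 2 (d + a : ℤ) := by
  rw [mem_sdiff, mem_MQ_iff hd hdvd, mem_MQk_one_iff hd hdvd] at hu
  obtain ⟨⟨t, ht1, ht0⟩, hnot⟩ := hu
  refine ⟨by linarith, not_lt.mp fun hlt => hnot (Int.exists_mul_mem_Icc_of_add_le (by omega) ?_)⟩
  linarith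

lemma exists_mem_MQ_diff_add_eq (hd : 0 < d) (ha : 0 < a) (hdvd : a ∣ d) {k : ℤ}
    (hk : k ∈ Icc 2 (d + a : ℤ)) : ∃ u ∈ MQ Γ Q \ MQk Γ Q ![d, 0] 1, u 0 + u 1 = k := by
  obtain ⟨hk2, hka⟩ := hk
  -- `j ≥ 1` puts `0` in the first interval; `k - a ≤ j ≤ d` puts the second one inside `(-a, 0)`.
  set j := min (d : ℤ) (k - 1)
  refine ⟨![j, k - j], ?_, by simp⟩
  simp only [mem_sdiff, mem_MQ_iff hd hdvd, mem_MQk_one_iff hd hdvd, Matrix.cons_val_zero,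
    Matrix.cons_val_one, Matrix.cons_val_fin_one]
  exact ⟨⟨0, by rw [mul_zero, mem_Icc]; omega⟩,
    Int.not_exists_mul_mem_Icc_of_neg (by omega) (by omega)⟩

end XdYa

end BS

/-- For a = (x^d, x^{d-a} y^a, y^d), d ≥ 2, a ∣ d, and Q the segment from (d,0) to
(0,d): with L_Q(x,y) = (x+y)/d, R_Q = {-k/d : 2 ≤ k ≤ d + a}. -/
theorem example_xd_ya (d a : ℕ) (hd : 2 ≤ d) (ha : 0 < a) (hdvd : a ∣ d)
    (L : (Fin 2 → ℝ) →ₗ[ℝ] ℝ) (hL : ∀ x, L x = (x 0 + x 1) / (d : ℝ)) :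
    BS.RQ {u : Fin 2 → ℕ | d ≤ u 0 ∨ (d - a ≤ u 0 ∧ a ≤ u 1) ∨ d ≤ u 1}
      (segment ℝ ![(d : ℝ), 0] ![0, (d : ℝ)]) ![d, 0] L =
    {x : ℝ | ∃ k : ℕ, 2 ≤ k ∧ k ≤ d + a ∧ x = -(k : ℝ) / (d : ℝ)} := by
  have hd0 : 0 < d := by omega
  ext x
  simp only [BS.RQ, BS.VQ, BS.span_segment_eq_top (Nat.cast_ne_zero.mpr hd0.ne'),
    Submodule.mem_top, true_and, hL, BS.toR, mem_ofPred_eq]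
  constructor
  · rintro ⟨u, hu, rfl⟩
    obtain ⟨h2, hle⟩ := BS.add_mem_Icc_of_mem_MQ_diff hd0 ha hdvd hu
    obtain ⟨k, hk⟩ := Int.eq_ofNat_of_zero_le (show 0 ≤ u 0 + u 1 by omega)
    refine ⟨k, by omega, by omega, ?_⟩
    rw [← Int.cast_add, hk, Int.cast_natCast, neg_div]
  · rintro ⟨k, hk2, hk, rfl⟩
    obtain ⟨u, hu, hsum⟩ :=
      BS.exists_mem_MQ_diff_add_eq (k := k) hd0 ha hdvd ⟨by omega, by omega⟩
    refine ⟨u, hu, ?_⟩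
    rw [← Int.cast_add, hsum, Int.cast_natCast, neg_div]
end

section
/- Let Q be the smallest face of P_a containing v_j for all j in some index set J, and suppose there exist λ_j ≥ 0 with Σλ_j = 1 such that Σ_{j∈J} λ_j v_j lies in the relative interior of Q. Then for every v ∈ Γ_a ∩ Q, the vector v − Σ_{j∈J} λ_j v_j lies in the convex cone generated by {v − v_j : j ∈ J}, and the convex cone generated by {w − Σ_{j∈J} λ_j v_j : w ∈ Γ_a ∩ Q} equals its linear span. -/
open Set

namespace BS
/-- x lies in the convex cone generated by D. -/
def InCone {n : ℕ} (D : Set (Fin n → ℝ)) (x : Fin n → ℝ) : Prop :=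
  ∃ (s : Finset (Fin n → ℝ)) (c : (Fin n → ℝ) → ℝ),
    (↑s : Set (Fin n → ℝ)) ⊆ D ∧ (∀ y, 0 ≤ c y) ∧ x = ∑ y ∈ s, c y • y
end BS

/-!
Write `b = ∑ λⱼ vⱼ`. Since `∑ λⱼ = 1`, `w - b = ∑ λⱼ (w - vⱼ)`, which gives the first claim.
For the second, it suffices that the cone generated by the `w - b` contains each `b - w`.
As `b` lies in the relative interior of `Q`, the point `q = b + ε (b - w)` lies in `Q` for
small `ε > 0`. A face of the convex hull of `Γ` is the convex hull of the points of `Γ` it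
contains, so `q - b = ε (b - w)` is a convex combination of vectors `w' - b` with `w' ∈ Γ ∩ Q`.
-/

open Topology Pointwise

theorem IsExtreme.subset_convexHull_inter {𝕜 E : Type*} [Field 𝕜] [LinearOrder 𝕜]
    [IsStrictOrderedRing 𝕜] [AddCommGroup E] [Module 𝕜 E] {S B : Set E}
    (h : IsExtreme 𝕜 (convexHull 𝕜 S) B) : B ⊆ convexHull 𝕜 (S ∩ B) := by
  -- `T` is convex: a point of `B` inside an open segment of the hull drags both ends into `B`.
  let T := {x ∈ convexHull 𝕜 S | x ∈ B → x ∈ convexHull 𝕜 (S ∩ B)}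
  have hT : Convex 𝕜 T := by
    rintro x ⟨hxS, hxB⟩ y ⟨hyS, hyB⟩ a c ha hc hac
    have hz : a • x + c • y ∈ segment 𝕜 x y := ⟨a, c, ha, hc, hac, rfl⟩
    refine ⟨convex_convexHull 𝕜 S hxS hyS ha hc hac, fun hzB => ?_⟩
    rw [← insert_endpoints_openSegment] at hz
    rcases hz with hzx | hzy | hzo
    · rw [hzx] at hzB ⊢
      exact hxB hzB
    · rw [hzy] at hzB ⊢
      exact hyB hzB
    · have hxB' := h.left_mem_of_mem_openSegment hxS hyS hzB hzo
      have hyB' := h.right_mem_of_mem_openSegment hxS hyS hzB hzo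
      exact convex_convexHull 𝕜 _ (hxB hxB') (hyB hyB') ha hc hac
  have hST : S ⊆ T := fun x hx =>
    ⟨subset_convexHull 𝕜 S hx, fun hxB => subset_convexHull 𝕜 _ ⟨hx, hxB⟩⟩
  exact fun x hx => (convexHull_min hST hT (h.subset hx)).2 hx

theorem PointedCone.mem_hull_iff_mem_span_of_neg_mem {R E : Type*} [Ring R] [LinearOrder R]
    [IsOrderedRing R] [AddCommGroup E] [Module R E] {s : Set E}
    (hs : ∀ x ∈ s, -x ∈ PointedCone.hull R s) {x : E} :
    x ∈ PointedCone.hull R s ↔ x ∈ Submodule.span R s := by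
  refine ⟨fun hx => PointedCone.hull_le_span R s hx, fun hx => ?_⟩
  have : Submodule.span R s ≤ (PointedCone.hull R s).lineal :=
    Submodule.span_le.mpr fun y hy => ⟨PointedCone.subset_hull hy, hs y hy⟩
  exact (this hx).1

theorem PointedCone.convexHull_subset_hull {R E : Type*} [Field R] [LinearOrder R]
    [IsStrictOrderedRing R] [AddCommGroup E] [Module R E] (s : Set E) :
    convexHull R s ⊆ PointedCone.hull R s :=
  convexHull_min PointedCone.subset_hull (PointedCone.convex _)

section RelativeInterior

variable {E : Type*} [AddCommGroup E] [Module ℝ E] [TopologicalSpace E]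
  [IsTopologicalAddGroup E] [ContinuousSMul ℝ E]

theorem exists_pos_add_smul_sub_mem_of_mem_intrinsicInterior {Q : Set E} {b x : E}
    (hb : b ∈ intrinsicInterior ℝ Q) (hx : x ∈ affineSpan ℝ Q) :
    ∃ ε : ℝ, 0 < ε ∧ b + ε • (b - x) ∈ Q := by
  obtain ⟨b, hbQ, rfl⟩ := mem_intrinsicInterior.mp hb
  let f : ℝ → affineSpan ℝ Q := fun t =>
    ⟨t • ((b : E) -ᵥ x) +ᵥ (b : E), AffineSubspace.smul_vsub_vadd_mem _ t b.2 hx b.2⟩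
  have hf : Continuous f :=
    (by fun_prop : Continuous fun t : ℝ => t • ((b : E) - x) + b).subtype_mk _
  have hf0 : f 0 = b := by ext; simp [f]
  have hnhds : ∀ᶠ t in 𝓝[>] (0 : ℝ), f t ∈ interior ((↑) ⁻¹' Q) :=
    nhdsWithin_le_nhds <| hf.continuousAt.preimage_mem_nhds <|
      isOpen_interior.mem_nhds (hf0 ▸ hbQ)
  obtain ⟨ε, hεQ, hε⟩ := (hnhds.and self_mem_nhdsWithin).exists
  refine ⟨ε, hε, ?_⟩
  simpa [f, add_comm] using interior_subset hεQ

theorem IsExtreme.sub_mem_hull_of_mem_intrinsicInterior {S Q : Set E} {b x : E}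
    (hQ : IsExtreme ℝ (convexHull ℝ S) Q) (hb : b ∈ intrinsicInterior ℝ Q) (hx : x ∈ Q) :
    b - x ∈ PointedCone.hull ℝ ((· - b) '' (S ∩ Q)) := by
  obtain ⟨ε, hε, hq⟩ :=
    exists_pos_add_smul_sub_mem_of_mem_intrinsicInterior hb (subset_affineSpan ℝ Q hx)
  have hqb : ε • (b - x) ∈ convexHull ℝ ((· - b) '' (S ∩ Q)) := by
    simp_rw [sub_eq_neg_add, ← vadd_eq_add, image_vadd, convexHull_vadd]
    exact ⟨_, hQ.subset_convexHull_inter hq, by simp [sub_eq_neg_add]⟩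
  have hεx : b - x = ε⁻¹ • ε • (b - x) := by rw [inv_smul_smul₀ hε.ne']
  rw [hεx]
  exact PointedCone.smul_mem _ (inv_nonneg.mpr hε.le) (PointedCone.convexHull_subset_hull _ hqb)

end RelativeInterior

theorem Finset.sub_sum_smul_eq_sum_smul_sub {ι R M : Type*} [Ring R] [AddCommGroup M]
    [Module R M] [Fintype ι] {J : Finset ι} {c : ι → R} (hcJ : ∀ j ∉ J, c j = 0)
    (hc : ∑ j, c j = 1)
    (x : M) (y : ι → M) :
    x - ∑ j, c j • y j = ∑ j ∈ J, c j • (x - y j) := by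
  rw [Finset.sum_subset (Finset.subset_univ J) fun j _ hj => by rw [hcJ j hj, zero_smul]]
  simp_rw [smul_sub]
  rw [Finset.sum_sub_distrib, ← Finset.sum_smul, hc, one_smul]

theorem BS.inCone_iff_mem_hull {n : ℕ} {D : Set (Fin n → ℝ)} {x : Fin n → ℝ} :
    BS.InCone D x ↔ x ∈ PointedCone.hull ℝ D := by
  constructor
  · rintro ⟨s, c, hs, hc, rfl⟩
    exact Submodule.sum_mem _ fun y hy =>
      PointedCone.smul_mem _ (hc y) (PointedCone.subset_hull (hs hy))
  · rw [PointedCone.mem_hull_set]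
    rintro ⟨c, hcD, hc, rfl⟩
    exact ⟨c.support, c, hcD, hc, rfl⟩

theorem smallest_face_cone_general {n r : ℕ} (v : Fin r → (Fin n → ℕ))
    (J : Finset (Fin r)) (Q : Set (Fin n → ℝ))
    (hface : IsExposed ℝ (BS.newton {u : Fin n → ℕ | ∃ j, ∀ i, v j i ≤ u i}) Q)
    (lam : Fin r → ℝ) (hlam0 : ∀ j, 0 ≤ lam j) (hlamJ : ∀ j ∉ J, lam j = 0)
    (hsum : ∑ j, lam j = 1)
    (hint : (∑ j, lam j • BS.natR (v j)) ∈ intrinsicInterior ℝ Q) :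
    (∀ w ∈ {u : Fin n → ℕ | ∃ j, ∀ i, v j i ≤ u i}, BS.natR w ∈ Q →
      BS.InCone {d | ∃ j ∈ J, d = BS.natR w - BS.natR (v j)}
        (BS.natR w - ∑ j, lam j • BS.natR (v j))) ∧
    (∀ x : Fin n → ℝ,
      x ∈ Submodule.span ℝ {d | ∃ w ∈ {u : Fin n → ℕ | ∃ j, ∀ i, v j i ≤ u i},
          BS.natR w ∈ Q ∧ d = BS.natR w - ∑ j, lam j • BS.natR (v j)} ↔
      BS.InCone {d | ∃ w ∈ {u : Fin n → ℕ | ∃ j, ∀ i, v j i ≤ u i},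
          BS.natR w ∈ Q ∧ d = BS.natR w - ∑ j, lam j • BS.natR (v j)} x) := by
  set Γ := {u : Fin n → ℕ | ∃ j, ∀ i, v j i ≤ u i}
  set b := ∑ j, lam j • BS.natR (v j)
  have hD : {d | ∃ w ∈ Γ, BS.natR w ∈ Q ∧ d = BS.natR w - b} =
      (· - b) '' (BS.natR '' Γ ∩ Q) := by
    ext d
    simp [eq_comm, and_assoc]
  refine ⟨fun w _ _ => ?_, fun x => ?_⟩
  · rw [BS.inCone_iff_mem_hull, Finset.sub_sum_smul_eq_sum_smul_sub hlamJ hsum]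
    exact Submodule.sum_mem _ fun j hj =>
      PointedCone.smul_mem _ (hlam0 j) (PointedCone.subset_hull ⟨j, hj, rfl⟩)
  · rw [BS.inCone_iff_mem_hull, hD, PointedCone.mem_hull_iff_mem_span_of_neg_mem]
    rintro _ ⟨y, hy, rfl⟩
    rw [neg_sub]
    exact hface.isExtreme.sub_mem_hull_of_mem_intrinsicInterior hint hy.2

/-- Step 6 geometry: if Σ λⱼ vⱼ lies in the relative interior of the smallest face Q
containing the vⱼ, j ∈ J, then every w - Σ λⱼ vⱼ (w ∈ Γ ∩ Q) lies in the cone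
generated by the w - vⱼ, and the cone generated by {w - Σ λⱼ vⱼ : w ∈ Γ ∩ Q}
equals its linear span. -/
theorem smallest_face_cone {n r : ℕ} (v : Fin r → (Fin n → ℕ))
    (J : Finset (Fin r)) (Q : Set (Fin n → ℝ))
    (hface : IsExposed ℝ (BS.newton {u : Fin n → ℕ | ∃ j, ∀ i, v j i ≤ u i}) Q)
    (hvQ : ∀ j ∈ J, BS.natR (v j) ∈ Q)
    (hmin : ∀ F : Set (Fin n → ℝ),
      IsExposed ℝ (BS.newton {u : Fin n → ℕ | ∃ j, ∀ i, v j i ≤ u i}) F →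
      (∀ j ∈ J, BS.natR (v j) ∈ F) → Q ⊆ F)
    (lam : Fin r → ℝ) (hlam0 : ∀ j, 0 ≤ lam j) (hlamJ : ∀ j ∉ J, lam j = 0)
    (hsum : ∑ j, lam j = 1)
    (hint : (∑ j, lam j • BS.natR (v j)) ∈ intrinsicInterior ℝ Q) :
    (∀ w ∈ {u : Fin n → ℕ | ∃ j, ∀ i, v j i ≤ u i}, BS.natR w ∈ Q →
      BS.InCone {d | ∃ j ∈ J, d = BS.natR w - BS.natR (v j)}
        (BS.natR w - ∑ j, lam j • BS.natR (v j))) ∧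
    (∀ x : Fin n → ℝ,
      x ∈ Submodule.span ℝ {d | ∃ w ∈ {u : Fin n → ℕ | ∃ j, ∀ i, v j i ≤ u i},
          BS.natR w ∈ Q ∧ d = BS.natR w - ∑ j, lam j • BS.natR (v j)} ↔
      BS.InCone {d | ∃ w ∈ {u : Fin n → ℕ | ∃ j, ∀ i, v j i ≤ u i},
          BS.natR w ∈ Q ∧ d = BS.natR w - ∑ j, lam j • BS.natR (v j)} x) :=
  smallest_face_cone_general v J Q hface lam hlam0 hlamJ hsum hint
end

section
/- For n = 2, if u ∈ E_Q = (Z_{>0}^2 ∩ V_Q) \ (G_Q' + Z_{>0}^2) for a bounded face Q of P_a not contained in a coordinate axis, then L_Q(u) ≤ 2. -/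
open Set

section Helpers

lemma BS.ldecomp {F : Type*} [FunLike F (Fin 2 → ℝ) ℝ] [LinearMapClass F ℝ (Fin 2 → ℝ) ℝ]
    (L : F) (x : Fin 2 → ℝ) :
    L x = x 0 * L ![1, 0] + x 1 * L ![0, 1] := by
  have hx : x = x 0 • ![(1:ℝ), 0] + x 1 • ![(0:ℝ), 1] := by
    funext m; fin_cases m <;> simp
  conv_lhs => rw [hx]
  rw [map_add, map_smul, map_smul, smul_eq_mul, smul_eq_mul]

lemma BS.natR_add_single_s18 (w : Fin 2 → ℕ) (i : Fin 2) (k : ℕ) :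
    BS.natR (w + fun m => if m = i then k else 0) =
      BS.natR w + (k : ℝ) • fun m => if m = i then (1:ℝ) else 0 := by
  funext m
  simp only [BS.natR, Pi.add_apply, Pi.smul_apply, smul_eq_mul]
  split_ifs <;> push_cast <;> ring

lemma BS.ray_unbounded (Γ : Set (Fin 2 → ℕ)) (hΓ : BS.IsMonIdeal Γ) (Q : Set (Fin 2 → ℝ))
    (hbdd : Bornology.IsBounded Q) (l : (Fin 2 → ℝ) →L[ℝ] ℝ)
    (hl : Q = {x ∈ BS.newton Γ | ∀ y ∈ BS.newton Γ, l y ≤ l x})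
    (w : Fin 2 → ℕ) (hw : w ∈ Γ) (hwQ : BS.natR w ∈ Q)
    (i : Fin 2) (hli : l (fun m => if m = i then (1:ℝ) else 0) = 0) : False := by
  obtain ⟨C, hC⟩ := isBounded_iff_forall_norm_le.1 hbdd
  obtain ⟨k, hk⟩ := exists_nat_gt C
  set wk : Fin 2 → ℕ := w + fun m => if m = i then k else 0 with hwkdef
  have hwkΓ : wk ∈ Γ := hΓ.2 w hw _
  have hwkR : BS.natR wk = BS.natR w + (k : ℝ) • fun m => if m = i then (1:ℝ) else 0 :=
    BS.natR_add_single_s18 w i k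
  have hwQ' := hwQ; rw [hl] at hwQ'
  have hlwk : l (BS.natR wk) = l (BS.natR w) := by
    rw [hwkR, map_add, map_smul, hli]; simp
  have hwkQ : BS.natR wk ∈ Q := by
    rw [hl]
    exact ⟨subset_convexHull ℝ _ ⟨wk, hwkΓ, rfl⟩, fun y hy => hlwk ▸ hwQ'.2 y hy⟩
  have h1 : (k : ℝ) ≤ ‖BS.natR wk‖ := by
    have h2 := norm_le_pi_norm (BS.natR wk) i
    have hv : BS.natR wk i = (w i : ℝ) + k := by
      simp [BS.natR, hwkdef]
    rw [hv] at h2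
    have h3 : ((w i : ℝ) + k) ≤ ‖BS.natR wk‖ := le_trans (le_abs_self _) h2
    have hwi : (0:ℝ) ≤ (w i : ℝ) := Nat.cast_nonneg _
    linarith
  linarith [hC _ hwkQ]

lemma BS.face_subset (Γ : Set (Fin 2 → ℕ)) (Q : Set (Fin 2 → ℝ))
    (l : (Fin 2 → ℝ) →L[ℝ] ℝ)
    (hl : Q = {x ∈ BS.newton Γ | ∀ y ∈ BS.newton Γ, l y ≤ l x}) :
    Q ⊆ convexHull ℝ {z | z ∈ BS.natR '' Γ ∧ z ∈ Q} := by
  intro q hq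
  have hq' := hq; rw [hl] at hq'
  obtain ⟨hqA, hqmax⟩ := hq'
  have hqh : q ∈ convexHull ℝ (BS.natR '' Γ) := hqA
  rw [convexHull_eq] at hqh
  obtain ⟨ι, t, wt, z, hw0, hw1, hzΓ, hqeq⟩ := hqh
  classical
  set t' : Finset ι := {i ∈ t | wt i ≠ 0} with ht'
  have hsub : t' ⊆ t := Finset.filter_subset _ _
  have hsum' : ∑ i ∈ t', wt i = 1 := by
    rw [ht', Finset.sum_filter_ne_zero]; exact hw1
  have hq2 : t'.centerMass wt z = q := by
    rw [ht', Finset.centerMass_filter_ne_zero]; exact hqeq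
  have hpos : ∀ i ∈ t', 0 < wt i := by
    intro i hi
    rcases Finset.mem_filter.1 hi with ⟨hit, hne⟩
    exact (hw0 i hit).lt_of_ne' hne
  have hzA : ∀ i ∈ t', z i ∈ BS.newton Γ := fun i hi =>
    subset_convexHull ℝ _ (hzΓ i (hsub hi))
  have hle : ∀ i ∈ t', l (z i) ≤ l q := fun i hi => hqmax _ (hzA i hi)
  have hqsum : q = ∑ i ∈ t', wt i • z i := by
    rw [← hq2, Finset.centerMass_eq_of_sum_1 _ _ hsum']
  have hlsum : l q = ∑ i ∈ t', wt i * l (z i) := by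
    conv_lhs => rw [hqsum]
    rw [map_sum]
    simp [smul_eq_mul]
  have heq : ∀ i ∈ t', l (z i) = l q := by
    intro i0 hi0
    by_contra hne
    have hlt : l (z i0) < l q := (hle i0 hi0).lt_of_ne hne
    have hslt : ∑ i ∈ t', wt i * l (z i) < ∑ i ∈ t', wt i * l q :=
      Finset.sum_lt_sum (fun i hi => mul_le_mul_of_nonneg_left (hle i hi) (hpos i hi).le)
        ⟨i0, hi0, mul_lt_mul_of_pos_left hlt (hpos i0 hi0)⟩
    rw [← Finset.sum_mul, hsum', one_mul] at hslt
    linarith [hlsum]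
  have hzQ : ∀ i ∈ t', z i ∈ {z | z ∈ BS.natR '' Γ ∧ z ∈ Q} := by
    intro i hi
    refine ⟨hzΓ i (hsub hi), ?_⟩
    rw [hl]
    exact ⟨hzA i hi, fun y hy => (heq i hi) ▸ hqmax y hy⟩
  rw [← hq2]
  exact Finset.centerMass_mem_convexHull t' (fun i hi => (hpos i hi).le)
    (by rw [hsum']; norm_num) hzQ

lemma BS.exists_k (X e : ℤ) (he : 0 < e) : ∃ k : ℤ, X ≤ k * e ∧ k * e ≤ X + e - 1 := by
  refine ⟨(X + e - 1) / e, ?_, ?_⟩ <;>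
  · have h1 := Int.emod_nonneg (X + e - 1) (ne_of_gt he)
    have h2 := Int.emod_lt_of_pos (X + e - 1) he
    have h3 := Int.mul_ediv_add_emod (X + e - 1) e
    nlinarith [h1, h2, h3]

lemma BS.final_calc (Γ : Set (Fin 2 → ℕ)) (Q : Set (Fin 2 → ℝ))
    (w : Fin 2 → ℕ) (hw : w ∈ Γ) (hwQ : BS.natR w ∈ Q)
    (L : (Fin 2 → ℝ) →ₗ[ℝ] ℝ) (hL1 : ∀ q ∈ Q, L q = 1)
    (ha : 0 < L ![1, 0]) (hb : 0 < L ![0, 1])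
    (v v' : Fin 2 → ℕ) (hv : v ∈ Γ) (hvQ : BS.natR v ∈ Q)
    (hv' : v' ∈ Γ) (hv'Q : BS.natR v' ∈ Q) (h0 : v' 0 < v 0)
    (u : Fin 2 → ℤ)
    (huE : ¬ ∃ g ∈ BS.diffGroup Γ Q, ∃ p : Fin 2 → ℤ,
      0 < p 0 ∧ 0 < p 1 ∧ u = BS.natZ w + g + p) :
    L (BS.toR u) ≤ 2 := by
  by_contra hgt
  push_neg at hgt
  set a := L ![(1:ℝ), 0] with hadef
  set b := L ![(0:ℝ), 1] with hbdef
  have hLu : L (BS.toR u) = ((u 0 : ℤ) : ℝ) * a + ((u 1 : ℤ) : ℝ) * b := BS.ldecomp L (BS.toR u)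
  have hv1 : (v 0 : ℝ) * a + (v 1 : ℝ) * b = 1 := by
    have h := hL1 _ hvQ; rw [BS.ldecomp] at h; simpa [BS.natR] using h
  have hv'1 : (v' 0 : ℝ) * a + (v' 1 : ℝ) * b = 1 := by
    have h := hL1 _ hv'Q; rw [BS.ldecomp] at h; simpa [BS.natR] using h
  have hd0R : (0:ℝ) < (v 0 : ℝ) - (v' 0 : ℝ) := by
    have h : (v' 0 : ℝ) < v 0 := by exact_mod_cast h0
    linarith
  have heq : ((v 0 : ℝ) - v' 0) * a = ((v' 1 : ℝ) - v 1) * b := by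
    linear_combination hv1 - hv'1
  have heR : (0:ℝ) < (v' 1 : ℝ) - (v 1 : ℝ) := by
    by_contra hc; push_neg at hc
    have h2 : ((v' 1 : ℝ) - v 1) * b ≤ 0 := mul_nonpos_of_nonpos_of_nonneg hc hb.le
    nlinarith [mul_pos hd0R ha]
  have he1 : v 1 < v' 1 := by exact_mod_cast (by linarith : (v 1 : ℝ) < v' 1)
  have hepos : (0:ℤ) < (v' 1 : ℤ) - (v 1 : ℤ) := by
    have : (v 1 : ℤ) < (v' 1 : ℤ) := by exact_mod_cast he1
    omega
  obtain ⟨k, hk1, hk2⟩ := BS.exists_k ((v' 1 : ℤ) - u 1 + 1) ((v' 1 : ℤ) - (v 1 : ℤ)) hepos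
  -- hk1 : v'1 - u1 + 1 ≤ k * (v'1 - v1)
  -- hk2 : k * (v'1 - v1) ≤ v'1 - u1 + (v'1 - v1)
  have haδR : ((v 0 : ℝ) - v' 0) * a ≤ 1 := by
    nlinarith [mul_nonneg (Nat.cast_nonneg (α := ℝ) (v' 0)) ha.le,
      mul_nonneg (Nat.cast_nonneg (α := ℝ) (v 1)) hb.le]
  have hgt' : 2 < ((u 0 : ℤ) : ℝ) * a + ((u 1 : ℤ) : ℝ) * b := by rw [hLu] at hgt; exact hgt
  have hk2R : ((u 1 : ℤ) : ℝ) ≤ (v' 1 : ℝ) + ((v' 1 : ℝ) - (v 1 : ℝ)) - (k : ℝ) * ((v' 1 : ℝ) - (v 1 : ℝ)) := by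
    have h6 : (u 1 : ℤ) ≤ (v' 1 : ℤ) + ((v' 1 : ℤ) - (v 1 : ℤ)) - k * ((v' 1 : ℤ) - (v 1 : ℤ)) := by
      linarith
    have h7 : ((u 1 : ℤ) : ℝ) ≤ (((v' 1 : ℤ) + ((v' 1 : ℤ) - (v 1 : ℤ)) - k * ((v' 1 : ℤ) - (v 1 : ℤ)) : ℤ) : ℝ) :=
      Int.cast_le.2 h6
    push_cast at h7
    push_cast
    linarith
  have hp0R : (0:ℝ) < ((u 0 : ℤ) : ℝ) - (v' 0 : ℝ) - (k : ℝ) * ((v 0 : ℝ) - (v' 0 : ℝ)) := by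
    by_contra hc; push_neg at hc
    have hA : ((u 0 : ℤ) : ℝ) * a ≤ ((v' 0 : ℝ) + (k : ℝ) * ((v 0 : ℝ) - (v' 0 : ℝ))) * a :=
      mul_le_mul_of_nonneg_right (by linarith) ha.le
    have hB : ((u 1 : ℤ) : ℝ) * b ≤
        ((v' 1 : ℝ) + ((v' 1 : ℝ) - (v 1 : ℝ)) - (k : ℝ) * ((v' 1 : ℝ) - (v 1 : ℝ))) * b :=
      mul_le_mul_of_nonneg_right hk2R hb.le
    have hkE : (k : ℝ) * (((v 0 : ℝ) - (v' 0 : ℝ)) * a) = (k : ℝ) * (((v' 1 : ℝ) - (v 1 : ℝ)) * b) := by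
      rw [heq]
    nlinarith [hA, hB, hkE, hv'1, haδR, hgt', heq]
  have hp0 : 0 < u 0 - (v' 0 : ℤ) - k * ((v 0 : ℤ) - (v' 0 : ℤ)) := by
    have hcast : ((u 0 - (v' 0 : ℤ) - k * ((v 0 : ℤ) - (v' 0 : ℤ)) : ℤ) : ℝ)
        = ((u 0 : ℤ) : ℝ) - (v' 0 : ℝ) - (k : ℝ) * ((v 0 : ℝ) - (v' 0 : ℝ)) := by
      push_cast; ring
    have h8 : (0:ℝ) < ((u 0 - (v' 0 : ℤ) - k * ((v 0 : ℤ) - (v' 0 : ℤ)) : ℤ) : ℝ) := by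
      rw [hcast]; exact hp0R
    exact_mod_cast h8
  have hp1 : 0 < u 1 - (v' 1 : ℤ) + k * ((v' 1 : ℤ) - (v 1 : ℤ)) := by linarith
  set g : Fin 2 → ℤ := (BS.natZ v' - BS.natZ w) + k • (BS.natZ v - BS.natZ v') with hgdef
  set p : Fin 2 → ℤ := u - BS.natZ w - g with hpdef
  have hmem1 : BS.natZ v' - BS.natZ w
      ∈ {d | ∃ x ∈ Γ, BS.natR x ∈ Q ∧ ∃ y ∈ Γ, BS.natR y ∈ Q ∧ d = BS.natZ x - BS.natZ y} :=
    ⟨v', hv', hv'Q, w, hw, hwQ, rfl⟩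
  have hmem2 : BS.natZ v - BS.natZ v'
      ∈ {d | ∃ x ∈ Γ, BS.natR x ∈ Q ∧ ∃ y ∈ Γ, BS.natR y ∈ Q ∧ d = BS.natZ x - BS.natZ y} :=
    ⟨v, hv, hvQ, v', hv', hv'Q, rfl⟩
  have hg : g ∈ BS.diffGroup Γ Q :=
    AddSubgroup.add_mem _
      (AddSubgroup.subset_closure hmem1)
      (AddSubgroup.zsmul_mem _ (AddSubgroup.subset_closure hmem2) k)
  have hp0' : 0 < p 0 := by
    rw [hpdef, hgdef]
    simp only [Pi.sub_apply, Pi.add_apply, Pi.smul_apply, smul_eq_mul, BS.natZ]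
    linarith [hp0]
  have hp1' : 0 < p 1 := by
    rw [hpdef, hgdef]
    simp only [Pi.sub_apply, Pi.add_apply, Pi.smul_apply, smul_eq_mul, BS.natZ]
    linarith [hp1]
  have hup : u = BS.natZ w + g + p := by rw [hpdef]; ring
  exact huE ⟨g, hg, p, hp0', hp1', hup⟩

end Helpers

/-- For n = 2: if u ∈ E_Q = ℤ²_{>0} \\ (G_Q' + ℤ²_{>0}) for a bounded
one-dimensional face Q not contained in a coordinate axis, then L_Q(u) ≤ 2. -/
theorem EQ_LQ_le_two (Γ : Set (Fin 2 → ℕ)) (hΓ : BS.IsMonIdeal Γ)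
    (Q : Set (Fin 2 → ℝ)) (hface : IsExposed ℝ (BS.newton Γ) Q)
    (hbdd : Bornology.IsBounded Q) (hnc : ¬ BS.InCoordHyp Q)
    (w : Fin 2 → ℕ) (hw : w ∈ Γ) (hwQ : BS.natR w ∈ Q)
    (L : (Fin 2 → ℝ) →ₗ[ℝ] ℝ) (hL1 : ∀ q ∈ Q, L q = 1)
    (hLge : ∀ x ∈ BS.newton Γ, 1 ≤ L x)
    (hspan : BS.VQ Q = ⊤)
    (u : Fin 2 → ℤ) (hu0 : 0 < u 0) (hu1 : 0 < u 1)
    (huE : ¬ ∃ g ∈ BS.diffGroup Γ Q, ∃ p : Fin 2 → ℤ,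
      0 < p 0 ∧ 0 < p 1 ∧ u = BS.natZ w + g + p) :
    L (BS.toR u) ≤ 2 := by
  classical
  obtain ⟨l, hl⟩ := hface ⟨_, hwQ⟩
  have hQhull := BS.face_subset Γ Q l hl
  set S : Set (Fin 2 → ℝ) := {z | z ∈ BS.natR '' Γ ∧ z ∈ Q} with hSdef
  have hspanQ : Submodule.span ℝ Q = ⊤ := hspan
  have hspanS : Submodule.span ℝ S = ⊤ := by
    have h1 : convexHull ℝ S ⊆ (Submodule.span ℝ S : Set (Fin 2 → ℝ)) :=
      convexHull_min Submodule.subset_span (Submodule.span ℝ S).convex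
    have h2 : Submodule.span ℝ Q ≤ Submodule.span ℝ S :=
      Submodule.span_le.2 (fun x hx => h1 (hQhull hx))
    rw [hspanQ] at h2
    exact top_unique h2
  have hife0 : (fun m : Fin 2 => if m = 0 then (1:ℝ) else 0) = ![1, 0] := by
    funext m; fin_cases m <;> simp
  have hife1 : (fun m : Fin 2 => if m = 1 then (1:ℝ) else 0) = ![0, 1] := by
    funext m; fin_cases m <;> simp
  -- two lattice points of Γ ∩ Q with nonproportional coordinates
  have hex : ∃ v1, v1 ∈ Γ ∧ BS.natR v1 ∈ Q ∧ ∃ v2, v2 ∈ Γ ∧ BS.natR v2 ∈ Q ∧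
      (v1 0 : ℝ) * (v2 1 : ℝ) ≠ (v1 1 : ℝ) * (v2 0 : ℝ) := by
    by_contra hno
    push_neg at hno
    have hwS : BS.natR w ∈ S := ⟨⟨w, hw, rfl⟩, hwQ⟩
    have hw0 : BS.natR w ≠ 0 := by
      intro h
      have h1 := hL1 _ hwQ
      rw [h, map_zero] at h1
      norm_num at h1
    have hP : ∀ y ∈ Submodule.span ℝ S, y 0 * BS.natR w 1 = y 1 * BS.natR w 0 := by
      intro y hy
      induction hy using Submodule.span_induction with
      | mem z hz =>
        obtain ⟨⟨vz, hvz, rfl⟩, hzQ⟩ := hz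
        have := hno vz hvz hzQ w hw hwQ
        simpa [BS.natR] using this
      | zero => simp
      | add y z _ _ hy hz => simp only [Pi.add_apply]; linear_combination hy + hz
      | smul c y _ hy => simp only [Pi.smul_apply, smul_eq_mul]; linear_combination c * hy
    have hx : (![BS.natR w 1, -(BS.natR w 0)] : Fin 2 → ℝ) ∈ Submodule.span ℝ S := by
      rw [hspanS]; exact Submodule.mem_top
    have h6 := hP _ hx
    simp at h6
    -- h6 : w1 * w1 = -(w0) * w0  (up to simp normal form)
    have hw00 : BS.natR w 0 = 0 := by nlinarith [h6, sq_nonneg (BS.natR w 0), sq_nonneg (BS.natR w 1)]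
    have hw11 : BS.natR w 1 = 0 := by nlinarith [h6, sq_nonneg (BS.natR w 0), sq_nonneg (BS.natR w 1)]
    apply hw0
    funext m; fin_cases m
    · exact hw00
    · exact hw11
  obtain ⟨v1, hv1Γ, hv1Q, v2, hv2Γ, hv2Q, hcross⟩ := hex
  -- values of L on the two points
  have e1 : (v1 0 : ℝ) * L ![1, 0] + (v1 1 : ℝ) * L ![0, 1] = 1 := by
    have hh := hL1 _ hv1Q; rw [BS.ldecomp] at hh; simpa [BS.natR] using hh
  have e2 : (v2 0 : ℝ) * L ![1, 0] + (v2 1 : ℝ) * L ![0, 1] = 1 := by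
    have hh := hL1 _ hv2Q; rw [BS.ldecomp] at hh; simpa [BS.natR] using hh
  -- nonnegativity of the coefficients of L
  have hnn : ∀ i : Fin 2, 0 ≤ L (fun m => if m = i then (1:ℝ) else 0) := by
    intro i
    have hmem : BS.natR (w + fun m => if m = i then 1 else 0) ∈ BS.newton Γ :=
      subset_convexHull ℝ _ ⟨_, hΓ.2 w hw _, rfl⟩
    have h1 := hLge _ hmem
    rw [BS.natR_add_single_s18 w i 1, map_add, map_smul, hL1 _ hwQ] at h1
    simp only [Nat.cast_one, one_smul] at h1
    linarith
  have ha0 : 0 ≤ L ![(1:ℝ), 0] := by rw [← hife0]; exact hnn 0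
  have hb0 : 0 ≤ L ![(0:ℝ), 1] := by rw [← hife1]; exact hnn 1
  -- positivity of the coefficients of L
  have haP : 0 < L ![(1:ℝ), 0] := by
    rcases ha0.lt_or_eq with h | h
    · exact h
    · exfalso
      rw [← h] at e1 e2
      simp only [zero_mul, mul_zero, zero_add] at e1 e2
      have hbne : L ![(0:ℝ), 1] ≠ 0 := by
        intro hb'; rw [hb'] at e1; simp at e1
      have h11 : (v1 1 : ℝ) = (v2 1 : ℝ) :=
        mul_right_cancel₀ hbne (e1.trans e2.symm)
      have h00 : (v1 0 : ℝ) ≠ (v2 0 : ℝ) := by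
        intro hsame
        exact hcross (by rw [hsame, h11]; ring)
      have hvq1 := hv1Q; have hvq2 := hv2Q
      rw [hl] at hvq1 hvq2
      have hll : l (BS.natR v1) = l (BS.natR v2) :=
        le_antisymm (hvq2.2 _ hvq1.1) (hvq1.2 _ hvq2.1)
      rw [BS.ldecomp l (BS.natR v1), BS.ldecomp l (BS.natR v2)] at hll
      simp only [BS.natR] at hll
      rw [h11] at hll
      have hmul : ((v1 0 : ℝ) - v2 0) * l ![(1:ℝ), 0] = 0 := by linear_combination hll
      have hl0 : l ![(1:ℝ), 0] = 0 := by
        rcases mul_eq_zero.1 hmul with h' | h'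
        · exact absurd (by linarith : (v1 0 : ℝ) = v2 0) h00
        · exact h'
      exact BS.ray_unbounded Γ hΓ Q hbdd l hl w hw hwQ 0 (by rw [hife0]; exact hl0)
  have hbP : 0 < L ![(0:ℝ), 1] := by
    rcases hb0.lt_or_eq with h | h
    · exact h
    · exfalso
      rw [← h] at e1 e2
      simp only [zero_mul, mul_zero, add_zero] at e1 e2
      have hane : L ![(1:ℝ), 0] ≠ 0 := by
        intro ha'; rw [ha'] at e1; simp at e1
      have h00 : (v1 0 : ℝ) = (v2 0 : ℝ) :=
        mul_right_cancel₀ hane (e1.trans e2.symm)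
      have h11 : (v1 1 : ℝ) ≠ (v2 1 : ℝ) := by
        intro hsame
        exact hcross (by rw [hsame, h00]; ring)
      have hvq1 := hv1Q; have hvq2 := hv2Q
      rw [hl] at hvq1 hvq2
      have hll : l (BS.natR v1) = l (BS.natR v2) :=
        le_antisymm (hvq2.2 _ hvq1.1) (hvq1.2 _ hvq2.1)
      rw [BS.ldecomp l (BS.natR v1), BS.ldecomp l (BS.natR v2)] at hll
      simp only [BS.natR] at hll
      rw [h00] at hll
      have hmul : ((v1 1 : ℝ) - v2 1) * l ![(0:ℝ), 1] = 0 := by linear_combination hll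
      have hl1 : l ![(0:ℝ), 1] = 0 := by
        rcases mul_eq_zero.1 hmul with h' | h'
        · exact absurd (by linarith : (v1 1 : ℝ) = v2 1) h11
        · exact h'
      exact BS.ray_unbounded Γ hΓ Q hbdd l hl w hw hwQ 1 (by rw [hife1]; exact hl1)
  -- the two points differ in the first coordinate
  have hne : v1 0 ≠ v2 0 := by
    intro hsame
    have hsR : (v1 0 : ℝ) = (v2 0 : ℝ) := by exact_mod_cast hsame
    have h11 : (v1 1 : ℝ) = (v2 1 : ℝ) := by
      have : (v1 1 : ℝ) * L ![0, 1] = (v2 1 : ℝ) * L ![0, 1] := by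
        rw [hsR] at e1; linarith [e1, e2]
      exact mul_right_cancel₀ (ne_of_gt hbP) this
    exact hcross (by rw [hsR, h11]; ring)
  rcases lt_or_gt_of_ne hne with hlt | hgt'
  · exact BS.final_calc Γ Q w hw hwQ L hL1 haP hbP v2 v1 hv2Γ hv2Q hv1Γ hv1Q hlt u huE
  · exact BS.final_calc Γ Q w hw hwQ L hL1 haP hbP v1 v2 hv1Γ hv1Q hv2Γ hv2Q hgt' u huE
end
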